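/- In ℤ^d, d ≥ 3, let K = B(0, L) be the ℓ^∞-ball of radius L ≥ 100 and let z₁, z₂ be two distinct points of the exterior boundary ∂_ext K. Then there exists a set U ⊆ K ∪ {z₁, z₂} containing a nearest-neighbor path joining z₁ and z₂, such that the complement 𝒮 = (K ∪ ∂_ext K) \ U is connected in the nearest-neighbor graph. -/

import Mathlib

/-- The nearest-neighbor graph on `ℤ^d`: `x ~ y` iff the Euclidean distance
between `x` and `y` is `1`. -/
def ZdGraph (d : ℕ) : SimpleGraph (Fin d → ℤ) where
  Adj x y := ∑ i, (x i - y i) ^ 2 = 1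
  symm := by
    constructor
    intro x y h
    beta_reduce at h ⊢
    rw [← h]
    exact Finset.sum_congr rfl fun i _ => by ring
  loopless := by constructor; intro x h; simp at h

/-!
Take `U = K̄ \ 𝒮`, where `𝒮` consists of `∂_ext K \ {z₁, z₂}` and of the corners of `K` not
adjacent to `z₁` or `z₂`. Inside `K`, monotone lattice paths towards the centre meet no corner,
so `z₁` and `z₂` are joined through `U`.

For the connectivity of `𝒮`, give each face `{x_j = ±(L+1)}` a hub whose free coordinates avoid
those of `z₁` and `z₂`, so that every hyperplane `{x_k = hub_k}` misses both obstacles. A face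
point whose axis line in some free direction misses `z₁` and `z₂` reaches such a hyperplane and
then the hub. If the lines in two directions `a ≠ b` are both blocked, the two blockers are `z₁`
and `z₂`, and any other face neighbour has a free line. A face point all of whose face neighbours
are obstacles is a corner of its face, next to a corner of `K` in `𝒮`. Finally, a corner at
sup-distance at least `2` from both obstacles ("clean") reaches the hubs of all faces through it;
each obstacle spoils at most one corner, so among three corners one is clean, and clean corners
link all faces.
-/

open Function Set

namespace SimpleGraph

variable {V : Type*} (G : SimpleGraph V)

def ReachableIn (S : Set V) (x y : V) : Prop :=
  ∃ (hx : x ∈ S) (hy : y ∈ S), (G.induce S).Reachable ⟨x, hx⟩ ⟨y, hy⟩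

variable {G} {S : Set V} {x y z : V}

namespace ReachableIn

theorem refl (hx : x ∈ S) : G.ReachableIn S x x := ⟨hx, hx, .refl _⟩

theorem symm (h : G.ReachableIn S x y) : G.ReachableIn S y x :=
  let ⟨hx, hy, h⟩ := h
  ⟨hy, hx, h.symm⟩

theorem trans (h₁ : G.ReachableIn S x y) (h₂ : G.ReachableIn S y z) : G.ReachableIn S x z :=
  let ⟨hx, _, h₁⟩ := h₁
  let ⟨_, hz, h₂⟩ := h₂
  ⟨hx, hz, h₁.trans h₂⟩

theorem of_adj (hx : x ∈ S) (hy : y ∈ S) (h : G.Adj x y) : G.ReachableIn S x y :=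
  ⟨hx, hy, Adj.reachable h⟩

theorem exists_seq (h : G.ReachableIn S x y) :
    ∃ (l : ℕ) (τ : ℕ → V), τ 0 = x ∧ τ l = y ∧
      (∀ i < l, G.Adj (τ i) (τ (i + 1))) ∧ ∀ i ≤ l, τ i ∈ S := by
  obtain ⟨hx, hy, ⟨p⟩⟩ := h
  exact ⟨p.length, fun i => p.getVert i, congrArg Subtype.val p.getVert_zero,
    congrArg Subtype.val p.getVert_length, fun i hi => p.adj_getVert_succ hi,
    fun i _ => (p.getVert i).2⟩

end ReachableIn

theorem induce_connected_of_reachableIn {x₀ : V} (h₀ : x₀ ∈ S)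
    (h : ∀ x ∈ S, G.ReachableIn S x x₀) : (G.induce S).Connected := by
  have : Nonempty S := ⟨⟨x₀, h₀⟩⟩
  refine .mk fun ⟨x, hx⟩ ⟨y, hy⟩ => ?_
  obtain ⟨hx', hy', hxy⟩ := (h x hx).trans (h y hy).symm
  exact hxy

end SimpleGraph

namespace ZdGraph

variable {d : ℕ} {x y : Fin d → ℤ}

theorem adj_iff : (ZdGraph d).Adj x y ↔ ∃ p, |x p - y p| = 1 ∧ ∀ q ≠ p, x q = y q := by
  change ∑ i, (x i - y i) ^ 2 = 1 ↔ _
  constructor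
  · intro h
    obtain ⟨p, hp⟩ : ∃ p, x p ≠ y p := by
      by_contra! hxy
      simp [hxy] at h
    have hsplit := Finset.add_sum_erase Finset.univ (fun i => (x i - y i) ^ 2) (Finset.mem_univ p)
    have hrest := Finset.sum_nonneg (s := Finset.univ.erase p) fun i _ => sq_nonneg (x i - y i)
    have hpos : 0 < (x p - y p) ^ 2 := by positivity [sub_ne_zero.mpr hp]
    have hp1 : (x p - y p) ^ 2 = 1 := by omega
    refine ⟨p, ?_, fun q hq => ?_⟩
    · rcases sq_eq_one_iff.mp hp1 with h | h <;> simp [h]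
    · have hzero : ∑ i ∈ Finset.univ.erase p, (x i - y i) ^ 2 = 0 := by omega
      have := (Finset.sum_eq_zero_iff_of_nonneg fun i _ => sq_nonneg (x i - y i)).mp hzero q
        (by simp [hq])
      exact sub_eq_zero.mp (pow_eq_zero_iff two_ne_zero |>.mp this)
  · rintro ⟨p, hp, hq⟩
    rw [Fintype.sum_eq_single p fun q hq' => by simp [hq q hq'], ← sq_abs, hp, one_pow]

theorem adj_update {p : Fin d} {c : ℤ} (h : |c - x p| = 1) : (ZdGraph d).Adj x (update x p c) :=
  adj_iff.mpr ⟨p, by rw [update_self, abs_sub_comm, h], fun q hq => (update_of_ne hq _ _).symm⟩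

theorem abs_sub_le_one_of_adj (h : (ZdGraph d).Adj x y) (i : Fin d) : |x i - y i| ≤ 1 := by
  obtain ⟨p, hp, hq⟩ := adj_iff.mp h
  by_cases hi : i = p
  · exact hi ▸ hp.le
  · simp [hq i hi]

theorem not_adj_of_ne_of_ne {i k : Fin d} (hik : i ≠ k) (hi : x i ≠ y i) (hk : x k ≠ y k) :
    ¬(ZdGraph d).Adj x y := by
  intro h
  obtain ⟨p, -, hq⟩ := adj_iff.mp h
  have hip : i = p := by_contra fun h => hi (hq i h)
  have hkp : k = p := by_contra fun h => hk (hq k h)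
  exact hik (hip.trans hkp.symm)

theorem reachableIn_of_forall_uIcc {S : Set (Fin d → ℤ)}
    (h : ∀ w : Fin d → ℤ, (∀ i, w i ∈ uIcc (x i) (y i)) → w ∈ S) :
    (ZdGraph d).ReachableIn S x y := by
  obtain ⟨n, hn⟩ : ∃ n, ∑ i, (y i - x i).natAbs = n := ⟨_, rfl⟩
  induction n generalizing x with
  | zero =>
    obtain rfl : x = y := funext fun i => by
      have := Finset.sum_eq_zero_iff.mp hn i (Finset.mem_univ i)
      omega
    exact .refl (h x fun i => left_mem_uIcc)
  | succ n ih =>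
    obtain ⟨i, hi⟩ : ∃ i, x i ≠ y i := by
      by_contra! hxy
      simp [hxy] at hn
    set x' := update x i (if x i < y i then x i + 1 else x i - 1)
    have hbox : ∀ w : Fin d → ℤ, (∀ k, w k ∈ uIcc (x' k) (y k)) → ∀ k, w k ∈ uIcc (x k) (y k) := by
      intro w hw k
      have := hw k
      by_cases hk : k = i
      · subst hk
        simp only [x', update_self, mem_uIcc] at this ⊢
        split_ifs at this <;> omega
      · rwa [show x' k = x k from update_of_ne hk _ _] at this
    have hcount : ∀ k, (y k - x k).natAbs = (y k - x' k).natAbs + if k = i then 1 else 0 := by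
      intro k
      by_cases hk : k = i
      · subst hk
        simp only [x', update_self, if_true]
        split_ifs <;> omega
      · simp [x', hk]
    rw [Finset.sum_congr rfl fun k _ => hcount k, Finset.sum_add_distrib,
      Finset.sum_ite_eq'] at hn
    simp only [Finset.mem_univ, if_true, Nat.add_right_cancel_iff] at hn
    have hstep : |(if x i < y i then x i + 1 else x i - 1) - x i| = 1 := by
      split_ifs <;> simp
    exact (SimpleGraph.ReachableIn.of_adj (h x fun k => left_mem_uIcc)
      (h x' (hbox x' fun k => left_mem_uIcc)) (adj_update hstep)).trans
      (ih (fun w hw => h w (hbox w hw)) hn)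

end ZdGraph

section LineFree

variable {ι α : Type*}

theorem eq_or_eq_of_mem_pair {z₁ z₂ p q z : α} (hp : p ∈ ({z₁, z₂} : Set α))
    (hq : q ∈ ({z₁, z₂} : Set α)) (hpq : p ≠ q) (hz : z ∈ ({z₁, z₂} : Set α)) : z = p ∨ z = q := by
  simp only [mem_insert_iff, mem_singleton_iff] at hp hq hz
  rcases hp with rfl | rfl <;> rcases hq with rfl | rfl <;> tauto

def LineFree (Z : Set (ι → α)) (x : ι → α) (k : ι) : Prop :=
  ∀ z ∈ Z, ∃ i ≠ k, z i ≠ x i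

variable {Z : Set (ι → α)} {x w p q : ι → α} {a b k t : ι} {c : α}

theorem LineFree.notMem (h : LineFree Z x k) (hw : ∀ i ≠ k, w i = x i) : w ∉ Z := by
  intro hwZ
  obtain ⟨i, hik, hi⟩ := h w hwZ
  exact hi (hw i hik)

theorem lineFree_update_of_cover [DecidableEq ι] (hcov : ∀ z ∈ Z, z = p ∨ z = q)
    (hp : ∀ i ≠ a, p i = x i) (hq : ∀ i ≠ b, q i = x i) (hab : a ≠ b) (hta : t ≠ a) (hc : c ≠ x t)
    (hy : update x t c ∉ Z) : LineFree Z (update x t c) a := by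
  intro z hz
  obtain rfl | rfl := hcov z hz
  · exact ⟨t, hta, by rw [hp t hta, update_self]; exact hc.symm⟩
  · by_cases htb : t = b
    · subst htb
      obtain ⟨i, hi⟩ := Function.ne_iff.mp fun h : z = update x t c => hy (h ▸ hz)
      refine ⟨i, ?_, hi⟩
      rintro rfl
      exact hi (by rw [hq i hab, update_of_ne hab])
    · exact ⟨t, hta, by rw [hq t htb, update_self]; exact hc.symm⟩

/-- If both axis lines through `x` in directions `a` and `b` are blocked, the two blocking points
use up `{z₁, z₂}`, and then every other neighbour of `x` sees a free line. -/
theorem lineFree_update_of_not_lineFree [DecidableEq ι] {z₁ z₂ : ι → α} (hab : a ≠ b)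
    (hx : x ∉ ({z₁, z₂} : Set (ι → α))) (ha : ¬LineFree {z₁, z₂} x a)
    (hb : ¬LineFree {z₁, z₂} x b) (hc : c ≠ x t) (hy : update x t c ∉ ({z₁, z₂} : Set (ι → α))) :
    LineFree {z₁, z₂} (update x t c) a ∨ LineFree {z₁, z₂} (update x t c) b := by
  simp only [LineFree] at ha hb
  push Not at ha hb
  obtain ⟨p, hpZ, hp⟩ := ha
  obtain ⟨q, hqZ, hq⟩ := hb
  have hpq : p ≠ q := by
    rintro rfl
    have hpx : p = x := funext fun i => by
      by_cases hia : i = a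
      · exact hq i (hia ▸ hab)
      · exact hp i hia
    exact hx (hpx ▸ hpZ)
  have hcov : ∀ z ∈ ({z₁, z₂} : Set (ι → α)), z = p ∨ z = q :=
    fun z hz => eq_or_eq_of_mem_pair hpZ hqZ hpq hz
  by_cases hta : t = a
  · subst hta
    exact .inr (lineFree_update_of_cover (fun z hz => (hcov z hz).symm) hq hp hab.symm hab hc hy)
  · exact .inl (lineFree_update_of_cover hcov hp hq hab hta hc hy)

end LineFree

namespace Corridor

variable {d : ℕ} {L t : ℤ}

def cube (d : ℕ) (L : ℤ) : Set (Fin d → ℤ) := {y | ∀ i, |y i| ≤ L}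

def extBoundary (d : ℕ) (L : ℤ) : Set (Fin d → ℤ) :=
  {x | x ∉ cube d L ∧ ∃ y ∈ cube d L, (ZdGraph d).Adj x y}

def OnFace (L : ℤ) (j : Fin d) (x : Fin d → ℤ) : Prop := |x j| = L + 1 ∧ ∀ i ≠ j, |x i| ≤ L

def IsCorner (L : ℤ) (c : Fin d → ℤ) : Prop := ∀ i, |c i| = L

/-- The complement `𝒮` of the corridor. Distinct faces of `∂_ext K` are not adjacent to each
other; the corners of `K` kept here are what links them. -/
def shell (L : ℤ) (z₁ z₂ : Fin d → ℤ) : Set (Fin d → ℤ) :=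
  (extBoundary d L \ {z₁, z₂}) ∪
    {c | IsCorner L c ∧ ¬(ZdGraph d).Adj c z₁ ∧ ¬(ZdGraph d).Adj c z₂}

def inward (t : ℤ) : ℤ := if 0 < t then t - 1 else t + 1

def outward (t : ℤ) : ℤ := if 0 < t then t + 1 else t - 1

theorem inward_ne_self (t : ℤ) : inward t ≠ t := by unfold inward; split_ifs <;> omega

theorem outward_ne_self (t : ℤ) : outward t ≠ t := by unfold outward; split_ifs <;> omega

theorem inward_ne_outward (t : ℤ) : inward t ≠ outward t := by
  unfold inward outward; split_ifs <;> omega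

theorem abs_inward_sub (t : ℤ) : |inward t - t| = 1 := by unfold inward; split_ifs <;> simp

theorem abs_outward_sub (t : ℤ) : |outward t - t| = 1 := by unfold outward; split_ifs <;> simp

theorem abs_inward_le (hL : 1 ≤ L) (h : |t| ≤ L) : |inward t| ≤ L := by
  rw [abs_le] at h ⊢; unfold inward; split_ifs <;> omega

theorem abs_inward_of_abs_eq (hL : 0 ≤ L) (h : |t| = L + 1) : |inward t| = L := by
  rw [abs_eq (by omega : 0 ≤ L + 1)] at h; rw [abs_eq hL]; unfold inward; split_ifs <;> omega

theorem abs_outward_of_abs_eq (h : |t| = L) : |outward t| = L + 1 := by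
  have hL : 0 ≤ L := h ▸ abs_nonneg t
  rw [abs_eq hL] at h; rw [abs_eq (by omega : 0 ≤ L + 1)]; unfold outward; split_ifs <;> omega

theorem abs_outward_le (h : |t| < L) : |outward t| ≤ L := by
  rw [abs_lt] at h; rw [abs_le]; unfold outward; split_ifs <;> omega

theorem outward_inward (hL : 0 < L) (h : |t| = L + 1) : outward (inward t) = t := by
  rw [abs_eq (by omega : 0 ≤ L + 1)] at h; unfold inward outward; split_ifs <;> omega

theorem exists_three_ne (hd : 3 ≤ d) : ∃ a b c : Fin d, a ≠ b ∧ a ≠ c ∧ b ≠ c :=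
  Fintype.two_lt_card_iff.mp (by simp; omega)

theorem exists_two_ne (hd : 3 ≤ d) (j : Fin d) : ∃ a b : Fin d, a ≠ b ∧ a ≠ j ∧ b ≠ j := by
  obtain ⟨a, b, c, hab, hac, hbc⟩ := exists_three_ne hd
  by_cases ha : a = j
  · subst ha; exact ⟨b, c, hbc, hab.symm, hac.symm⟩
  by_cases hb : b = j
  · subst hb; exact ⟨a, c, hac, hab, hbc.symm⟩
  exact ⟨a, b, hab, ha, hb⟩

variable {z₁ z₂ x y w c c' : Fin d → ℤ} {i j k m a b : Fin d} {v : ℤ}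

theorem IsCorner.mem_cube (hc : IsCorner L c) : c ∈ cube d L := fun i => (hc i).le

theorem OnFace.update (hx : OnFace L j x) (hij : i ≠ j) {s : ℤ} (hs : |s| ≤ L) :
    OnFace L j (update x i s) :=
  ⟨by rw [update_of_ne hij.symm]; exact hx.1, fun k hk => by
    rw [update_apply]; split_ifs; exacts [hs, hx.2 k hk]⟩

theorem onFace_of_forall_uIcc (hx : OnFace L j x) (hy : OnFace L j y) (hxy : x j = y j)
    (hw : ∀ i, w i ∈ uIcc (x i) (y i)) : OnFace L j w := by
  have hwj : w j = x j := by simpa [hxy] using hw j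
  refine ⟨hwj ▸ hx.1, fun i hi => ?_⟩
  have h1 := hw i
  have h2 := hx.2 i hi
  have h3 := hy.2 i hi
  rw [mem_uIcc] at h1
  rw [abs_le] at h2 h3 ⊢
  omega

theorem mem_extBoundary_iff (hL : 0 ≤ L) : x ∈ extBoundary d L ↔ ∃ j, OnFace L j x := by
  constructor
  · rintro ⟨hx, y, hy, hxy⟩
    obtain ⟨p, hp, hq⟩ := ZdGraph.adj_iff.mp hxy
    have hoff : ∀ i ≠ p, |x i| ≤ L := fun i hi => hq i hi ▸ hy i
    refine ⟨p, le_antisymm ?_ ?_, hoff⟩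
    · have := hy p
      have := abs_sub_abs_le_abs_sub (x p) (y p)
      linarith
    · by_contra hlt
      exact hx fun i => if hi : i = p then hi ▸ (by omega) else hoff i hi
  · rintro ⟨j, hj, hoff⟩
    refine ⟨fun h => by have := h j; omega, update x j (inward (x j)), fun i => ?_,
      ZdGraph.adj_update (abs_inward_sub _)⟩
    rw [update_apply]
    split_ifs with hi
    · subst hi; exact (abs_inward_of_abs_eq hL hj).le
    · exact hoff i hi

theorem mem_shell_of_onFace (hL : 0 ≤ L) (hx : OnFace L j x)
    (hxZ : x ∉ ({z₁, z₂} : Set _)) : x ∈ shell L z₁ z₂ :=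
  .inl ⟨(mem_extBoundary_iff hL).2 ⟨j, hx⟩, hxZ⟩

theorem mem_shell_of_isCorner (hc : IsCorner L c) (hc₁ : ¬(ZdGraph d).Adj c z₁)
    (hc₂ : ¬(ZdGraph d).Adj c z₂) : c ∈ shell L z₁ z₂ :=
  .inr ⟨hc, hc₁, hc₂⟩

def safeCoord (a b : ℤ) : ℤ := if a ≠ 0 ∧ b ≠ 0 then 0 else if a ≠ 1 ∧ b ≠ 1 then 1 else 2

theorem safeCoord_spec (a b : ℤ) :
    0 ≤ safeCoord a b ∧ safeCoord a b ≤ 2 ∧ safeCoord a b ≠ a ∧ safeCoord a b ≠ b := by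
  unfold safeCoord; split_ifs <;> omega

/-- Every axis-parallel hyperplane through a free coordinate of the hub misses `z₁` and `z₂`. -/
def hub (z₁ z₂ : Fin d → ℤ) (j : Fin d) (v : ℤ) : Fin d → ℤ :=
  update (fun i => safeCoord (z₁ i) (z₂ i)) j v

theorem hub_apply_of_ne (h : i ≠ j) : hub z₁ z₂ j v i = safeCoord (z₁ i) (z₂ i) :=
  update_of_ne h _ _

theorem reachableIn_hub_of_lineFree (hL : 2 ≤ L) (hx : OnFace L j x) (hkj : k ≠ j)
    (hfree : LineFree ({z₁, z₂} : Set _) x k) :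
    (ZdGraph d).ReachableIn (shell L z₁ z₂) x (hub z₁ z₂ j (x j)) := by
  have hsafe : ∀ i, |safeCoord (z₁ i) (z₂ i)| ≤ L := fun i => by
    have := safeCoord_spec (z₁ i) (z₂ i); rw [abs_le]; omega
  set x' := update x k (safeCoord (z₁ k) (z₂ k))
  have hx' : OnFace L j x' := hx.update hkj (hsafe k)
  have hx'j : x' j = x j := update_of_ne hkj.symm _ _
  have hT : OnFace L j (hub z₁ z₂ j (x j)) :=
    ⟨by simp [hub, hx.1], fun i hi => by rw [hub_apply_of_ne hi]; exact hsafe i⟩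
  refine .trans (y := x') (ZdGraph.reachableIn_of_forall_uIcc fun w hw => ?_)
    (ZdGraph.reachableIn_of_forall_uIcc fun w hw => ?_)
  · refine mem_shell_of_onFace (by omega) (onFace_of_forall_uIcc hx hx' hx'j.symm hw)
      (hfree.notMem fun i hi => ?_)
    simpa [x', update_of_ne hi] using hw i
  · have hwk : w k = safeCoord (z₁ k) (z₂ k) := by simpa [x', hub_apply_of_ne hkj] using hw k
    refine mem_shell_of_onFace (by omega) (onFace_of_forall_uIcc hx' hT (by simp [hx'j, hub]) hw) ?_
    have := safeCoord_spec (z₁ k) (z₂ k)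
    simp only [mem_insert_iff, mem_singleton_iff]
    rintro (rfl | rfl) <;> omega

theorem reachableIn_hub_of_neighbor (hd : 3 ≤ d) (hL : 2 ≤ L) (hx : OnFace L j x)
    (hxZ : x ∉ ({z₁, z₂} : Set _)) (hmj : m ≠ j) {s : ℤ} (hs : |s| ≤ L) (hsx : |s - x m| = 1)
    (hy : update x m s ∉ ({z₁, z₂} : Set _)) :
    (ZdGraph d).ReachableIn (shell L z₁ z₂) x (hub z₁ z₂ j (x j)) := by
  obtain ⟨a, b, hab, haj, hbj⟩ := exists_two_ne hd j
  by_cases ha : LineFree ({z₁, z₂} : Set _) x a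
  · exact reachableIn_hub_of_lineFree hL hx haj ha
  by_cases hb : LineFree ({z₁, z₂} : Set _) x b
  · exact reachableIn_hub_of_lineFree hL hx hbj hb
  have hy' : OnFace L j (update x m s) := hx.update hmj hs
  have hxy : (ZdGraph d).ReachableIn (shell L z₁ z₂) x (update x m s) :=
    .of_adj (mem_shell_of_onFace (by omega) hx hxZ) (mem_shell_of_onFace (by omega) hy' hy)
      (ZdGraph.adj_update hsx)
  have hsne : s ≠ x m := fun h => by simp [h] at hsx
  rw [← show update x m s j = x j from update_of_ne hmj.symm _ _]
  rcases lineFree_update_of_not_lineFree hab hxZ ha hb hsne hy with h | h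
  · exact hxy.trans (reachableIn_hub_of_lineFree hL hy' haj h)
  · exact hxy.trans (reachableIn_hub_of_lineFree hL hy' hbj h)


theorem reachableIn_hub_of_isCorner (hd : 3 ≤ d) (hL : 2 ≤ L) (hc : IsCorner L c)
    (hc₁ : ¬(ZdGraph d).Adj c z₁) (hc₂ : ¬(ZdGraph d).Adj c z₂) (hkm : k ≠ m)
    (hf : update c k (outward (c k)) ∉ ({z₁, z₂} : Set _))
    (hg : update (update c k (outward (c k))) m (inward (c m)) ∉ ({z₁, z₂} : Set _)) :
    (ZdGraph d).ReachableIn (shell L z₁ z₂) c (hub z₁ z₂ k (outward (c k))) := by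
  set f := update c k (outward (c k))
  have hf' : OnFace L k f :=
    ⟨by simp [f, abs_outward_of_abs_eq (hc k)], fun i hi => by simp [f, update_of_ne hi, hc i]⟩
  have hfm : f m = c m := update_of_ne hkm.symm _ _
  have hreach := reachableIn_hub_of_neighbor hd hL hf' hf hkm.symm
    (abs_inward_le (by omega) (hc m).le) (by rw [hfm]; exact abs_inward_sub _) hg
  rw [show f k = outward (c k) from update_self ..] at hreach
  exact (SimpleGraph.ReachableIn.of_adj (mem_shell_of_isCorner hc hc₁ hc₂)
    (mem_shell_of_onFace (by omega) hf' hf) (ZdGraph.adj_update (abs_outward_sub _))).trans hreach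

theorem exists_reachableIn_hub_of_isCorner (hd : 3 ≤ d) (hL : 2 ≤ L) (hc : IsCorner L c)
    (hc₁ : ¬(ZdGraph d).Adj c z₁) (hc₂ : ¬(ZdGraph d).Adj c z₂) :
    ∃ k v, |v| = L + 1 ∧ (ZdGraph d).ReachableIn (shell L z₁ z₂) c (hub z₁ z₂ k v) := by
  obtain ⟨i₀, i₁, i₂, h01, h02, h12⟩ := exists_three_ne hd
  have hf : ∀ k, update c k (outward (c k)) ∉ ({z₁, z₂} : Set _) := by
    intro k
    have hadj := ZdGraph.adj_update (x := c) (p := k) (abs_outward_sub (c k))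
    simp only [mem_insert_iff, mem_singleton_iff]
    rintro (h | h)
    · exact hc₁ (h ▸ hadj)
    · exact hc₂ (h ▸ hadj)
  set g : Fin d → Fin d → Fin d → ℤ :=
    fun k m => update (update c k (outward (c k))) m (inward (c m))
  have hreach : ∀ k m, k ≠ m → g k m ∉ ({z₁, z₂} : Set _) →
      ∃ k v, |v| = L + 1 ∧ (ZdGraph d).ReachableIn (shell L z₁ z₂) c (hub z₁ z₂ k v) :=
    fun k m hkm hg => ⟨k, _, abs_outward_of_abs_eq (hc k),
      reachableIn_hub_of_isCorner hd hL hc hc₁ hc₂ hkm (hf k) hg⟩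
  by_contra hnone
  have h01' : g i₀ i₁ ∈ ({z₁, z₂} : Set _) := by_contra fun h => hnone (hreach _ _ h01 h)
  have h02' : g i₀ i₂ ∈ ({z₁, z₂} : Set _) := by_contra fun h => hnone (hreach _ _ h02 h)
  have h10' : g i₁ i₀ ∈ ({z₁, z₂} : Set _) := by_contra fun h => hnone (hreach _ _ h01.symm h)
  have hne : g i₀ i₁ ≠ g i₁ i₀ := fun h => by
    have := congrFun h i₀
    simp [g, h01] at this
    exact inward_ne_outward _ this.symm
  rcases eq_or_eq_of_mem_pair h01' h10' hne h02' with h | h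
  · have := congrFun h i₁
    simp [g, h01.symm, h12] at this
    exact inward_ne_self _ this.symm
  · have := congrFun h i₀
    simp [g, h02] at this
    exact inward_ne_outward _ this.symm

def IsClean (z₁ z₂ c : Fin d → ℤ) : Prop := ∀ z ∈ ({z₁, z₂} : Set _), ∃ i, 1 < |z i - c i|

theorem IsClean.notMem (h : IsClean z₁ z₂ c) (hw : ∀ i, |w i - c i| ≤ 1) :
    w ∉ ({z₁, z₂} : Set _) := fun hwZ =>
  let ⟨i, hi⟩ := h w hwZ
  (hw i).not_gt hi

theorem IsClean.not_adj (h : IsClean z₁ z₂ c) {z : Fin d → ℤ} (hz : z ∈ ({z₁, z₂} : Set _)) :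
    ¬(ZdGraph d).Adj c z := fun hadj =>
  h.notMem (fun i => abs_sub_comm (c i) (z i) ▸ ZdGraph.abs_sub_le_one_of_adj hadj i) hz

theorem IsClean.reachableIn_hub (hd : 3 ≤ d) (hL : 2 ≤ L) (hc : IsCorner L c)
    (h : IsClean z₁ z₂ c) (k : Fin d) :
    (ZdGraph d).ReachableIn (shell L z₁ z₂) c (hub z₁ z₂ k (outward (c k))) := by
  obtain ⟨m, -, -, hmk, -⟩ := exists_two_ne hd k
  refine reachableIn_hub_of_isCorner hd hL hc (h.not_adj (by simp)) (h.not_adj (by simp))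
    hmk.symm (h.notMem fun i => ?_) (h.notMem fun i => ?_)
  · rw [update_apply]
    split_ifs with hi
    · subst hi; exact (abs_outward_sub _).le
    · simp
  · simp only [update_apply]
    split_ifs with h1 h2
    · subst h1; exact (abs_inward_sub _).le
    · subst h2; exact (abs_outward_sub _).le
    · simp

theorem IsCorner.eq_of_near (hL : 2 ≤ L) (hc : IsCorner L c) (hc' : IsCorner L c')
    {z : Fin d → ℤ} (h : ∀ i, |z i - c i| ≤ 1) (h' : ∀ i, |z i - c' i| ≤ 1) : c = c' :=
  funext fun i => by
    have h1 := hc i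
    have h2 := hc' i
    have h3 := h i
    have h4 := h' i
    rw [abs_eq (by omega : 0 ≤ L)] at h1 h2
    rw [abs_le] at h3 h4
    omega

/-- Each of `z₁`, `z₂` is within sup-distance `1` of at most one corner. -/
theorem isClean_or_isClean_or_isClean {p q r : Fin d → ℤ} (hL : 2 ≤ L) (hp : IsCorner L p)
    (hq : IsCorner L q) (hr : IsCorner L r) (hpq : p ≠ q) (hpr : p ≠ r) (hqr : q ≠ r) :
    IsClean z₁ z₂ p ∨ IsClean z₁ z₂ q ∨ IsClean z₁ z₂ r := by
  by_contra h
  simp only [not_or, IsClean, not_forall, not_exists, not_lt, exists_prop, mem_insert_iff,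
    mem_singleton_iff] at h
  obtain ⟨⟨zp, hzp, hp'⟩, ⟨zq, hzq, hq'⟩, ⟨zr, hzr, hr'⟩⟩ := h
  rcases hzp with rfl | rfl <;> rcases hzq with rfl | rfl <;> rcases hzr with rfl | rfl <;>
    first
    | exact hpq (hp.eq_of_near hL hq hp' hq')
    | exact hpr (hp.eq_of_near hL hr hp' hr')
    | exact hqr (hq.eq_of_near hL hr hq' hr')

theorem IsCorner.flip (hc : IsCorner L c) (a : Fin d) : IsCorner L (update c a (-c a)) :=
  fun i => by
    rw [update_apply]
    split_ifs with h
    · subst h; rw [abs_neg]; exact hc i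
    · exact hc i

theorem exists_isClean_flip (hL : 2 ≤ L) (hc : IsCorner L c) (hab : a ≠ b) :
    ∃ c', IsCorner L c' ∧ IsClean z₁ z₂ c' ∧ (∀ i, i ≠ a → i ≠ b → c' i = c i) ∧
      (c' a = -c a ∨ c' b = -c b) := by
  have hca : c a ≠ 0 := fun h => by have := hc a; rw [h] at this; simp at this; omega
  have hcb : c b ≠ 0 := fun h => by have := hc b; rw [h] at this; simp at this; omega
  set p := update c a (-c a)
  set q := update c b (-c b)
  set r := update p b (-p b)
  have hpb : p b = c b := update_of_ne hab.symm _ _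
  have hpq : p ≠ q := fun h => by
    have := congrFun h a; simp [p, q, hab] at this; omega
  have hpr : p ≠ r := fun h => by
    have := congrFun h b; simp [r, hpb] at this; omega
  have hqr : q ≠ r := fun h => by
    have := congrFun h a; simp [p, q, r, hab] at this; omega
  rcases isClean_or_isClean_or_isClean (z₁ := z₁) (z₂ := z₂) hL (hc.flip a) (hc.flip b)
    ((hc.flip a).flip b) hpq hpr hqr with h | h | h
  · exact ⟨p, hc.flip a, h, fun i hia _ => update_of_ne hia _ _, .inl (update_self ..)⟩
  · exact ⟨q, hc.flip b, h, fun i _ hib => update_of_ne hib _ _, .inr (update_self ..)⟩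
  · refine ⟨r, (hc.flip a).flip b, h, fun i hia hib => ?_, .inr ?_⟩
    · simp [r, p, hia, hib]
    · simp [r, hpb]

theorem exists_isClean_reachableIn_hub (hd : 3 ≤ d) (hL : 2 ≤ L) (hv : |v| = L + 1)
    (j : Fin d) : ∃ c, IsCorner L c ∧ IsClean z₁ z₂ c ∧
      (ZdGraph d).ReachableIn (shell L z₁ z₂) c (hub z₁ z₂ j v) := by
  set c₀ : Fin d → ℤ := update (fun _ => L) j (inward v)
  have hc₀ : IsCorner L c₀ := fun i => by
    simp only [c₀, update_apply]
    split_ifs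
    exacts [abs_inward_of_abs_eq (by omega) hv, abs_of_nonneg (by omega)]
  obtain ⟨a, b, hab, haj, hbj⟩ := exists_two_ne hd j
  obtain ⟨c, hc, hclean, hoff, -⟩ := exists_isClean_flip (z₁ := z₁) (z₂ := z₂) hL hc₀ hab
  have hcj : c j = inward v := by rw [hoff j haj.symm hbj.symm]; exact update_self ..
  refine ⟨c, hc, hclean, ?_⟩
  have := hclean.reachableIn_hub hd hL hc j
  rwa [hcj, outward_inward (by omega) hv] at this

theorem IsClean.reachableIn_of_eq (hd : 3 ≤ d) (hL : 2 ≤ L) (hc : IsCorner L c)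
    (hc' : IsCorner L c') (h : IsClean z₁ z₂ c) (h' : IsClean z₁ z₂ c') (hk : c k = c' k) :
    (ZdGraph d).ReachableIn (shell L z₁ z₂) c c' := by
  have := (h'.reachableIn_hub hd hL hc' k).symm
  rw [← hk] at this
  exact (h.reachableIn_hub hd hL hc k).trans this

theorem IsClean.reachableIn (hd : 3 ≤ d) (hL : 2 ≤ L) (hc : IsCorner L c)
    (hc' : IsCorner L c') (h : IsClean z₁ z₂ c) (h' : IsClean z₁ z₂ c') :
    (ZdGraph d).ReachableIn (shell L z₁ z₂) c c' := by
  by_cases hshare : ∃ k, c k = c' k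
  · obtain ⟨k, hk⟩ := hshare
    exact h.reachableIn_of_eq hd hL hc hc' h' hk
  push Not at hshare
  have hanti : ∀ k, c' k = -c k := fun k => by
    have h1 := hc k
    have h2 := hc' k
    have h3 := hshare k
    rw [abs_eq (by omega : 0 ≤ L)] at h1 h2
    omega
  obtain ⟨i₀, i₁, i₂, h01, h02, h12⟩ := exists_three_ne hd
  obtain ⟨c'', hc'', h'', hoff, hflip⟩ := exists_isClean_flip (z₁ := z₁) (z₂ := z₂) hL hc h01
  refine (h.reachableIn_of_eq hd hL hc hc'' h'' (hoff i₂ h02.symm h12.symm).symm).trans ?_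
  rcases hflip with hf | hf
  · exact h''.reachableIn_of_eq hd hL hc'' hc' h' (hf.trans (hanti i₀).symm)
  · exact h''.reachableIn_of_eq hd hL hc'' hc' h' (hf.trans (hanti i₁).symm)


theorem update_inward_ne_update_inward (x : Fin d → ℤ) (hab : a ≠ b) :
    update x a (inward (x a)) ≠ update x b (inward (x b)) := fun h => by
  have := congrFun h a
  simp [hab] at this
  exact inward_ne_self _ this

theorem update_inward_ne_update_outward (x : Fin d → ℤ) (k m : Fin d) :
    update x k (inward (x k)) ≠ update x m (outward (x m)) := fun h => by
  have := congrFun h m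
  rw [update_self, update_apply] at this
  split_ifs at this with hmk
  · subst hmk; exact inward_ne_outward _ this
  · exact outward_ne_self _ this.symm

theorem not_adj_update_inward (x : Fin d → ℤ) (hkj : k ≠ j) :
    ¬(ZdGraph d).Adj (update x j (inward (x j))) (update x k (inward (x k))) :=
  ZdGraph.not_adj_of_ne_of_ne hkj.symm (by simp [hkj.symm, inward_ne_self])
    (by simp [hkj, (inward_ne_self _).symm])

theorem OnFace.isCorner_update_inward (hL : 0 ≤ L) (hx : OnFace L j x)
    (hedge : ∀ m ≠ j, L ≤ |x m|) : IsCorner L (Function.update x j (inward (x j))) := fun i => by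
  rw [update_apply]
  split_ifs with hi
  · subst hi; exact abs_inward_of_abs_eq hL hx.1
  · exact le_antisymm (hx.2 i hi) (hedge i hi)

theorem exists_reachableIn_hub_of_onFace (hd : 3 ≤ d) (hL : 2 ≤ L) (hx : OnFace L j x)
    (hxZ : x ∉ ({z₁, z₂} : Set _)) :
    ∃ k v, |v| = L + 1 ∧ (ZdGraph d).ReachableIn (shell L z₁ z₂) x (hub z₁ z₂ k v) := by
  have hneighbor : ∀ m ≠ j, ∀ s, |s| ≤ L → |s - x m| = 1 → update x m s ∉ ({z₁, z₂} : Set _) →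
      ∃ k v, |v| = L + 1 ∧ (ZdGraph d).ReachableIn (shell L z₁ z₂) x (hub z₁ z₂ k v) :=
    fun m hm s hs hsx hy => ⟨j, x j, hx.1, reachableIn_hub_of_neighbor hd hL hx hxZ hm hs hsx hy⟩
  obtain ⟨a, b, hab, haj, hbj⟩ := exists_two_ne hd j
  by_cases ha : update x a (inward (x a)) ∈ ({z₁, z₂} : Set _)
  swap
  · exact hneighbor a haj _ (abs_inward_le (by omega) (hx.2 a haj)) (abs_inward_sub _) ha
  by_cases hb : update x b (inward (x b)) ∈ ({z₁, z₂} : Set _)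
  swap
  · exact hneighbor b hbj _ (abs_inward_le (by omega) (hx.2 b hbj)) (abs_inward_sub _) hb
  have hcov : ∀ z ∈ ({z₁, z₂} : Set _),
      z = update x a (inward (x a)) ∨ z = update x b (inward (x b)) :=
    fun z hz => eq_or_eq_of_mem_pair ha hb (update_inward_ne_update_inward x hab) hz
  by_cases hedge : ∃ m ≠ j, |x m| < L
  · obtain ⟨m, hm, hlt⟩ := hedge
    refine hneighbor m hm _ (abs_outward_le hlt) (abs_outward_sub _) fun hy => ?_
    rcases hcov _ hy with h | h
    exacts [update_inward_ne_update_outward x a m h.symm,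
      update_inward_ne_update_outward x b m h.symm]
  push Not at hedge
  have hc := hx.isCorner_update_inward (by omega) hedge
  have hcz : ∀ z ∈ ({z₁, z₂} : Set _), ¬(ZdGraph d).Adj (update x j (inward (x j))) z :=
    fun z hz => by
      rcases hcov z hz with rfl | rfl
      exacts [not_adj_update_inward x haj, not_adj_update_inward x hbj]
  obtain ⟨k, v, hv, hreach⟩ :=
    exists_reachableIn_hub_of_isCorner hd hL hc (hcz z₁ (by simp)) (hcz z₂ (by simp))
  exact ⟨k, v, hv, (SimpleGraph.ReachableIn.of_adj (mem_shell_of_onFace (by omega) hx hxZ)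
    (mem_shell_of_isCorner hc (hcz z₁ (by simp)) (hcz z₂ (by simp)))
    (ZdGraph.adj_update (abs_inward_sub _))).trans hreach⟩

theorem exists_reachableIn_hub (hd : 3 ≤ d) (hL : 2 ≤ L) (hx : x ∈ shell L z₁ z₂) :
    ∃ k v, |v| = L + 1 ∧ (ZdGraph d).ReachableIn (shell L z₁ z₂) x (hub z₁ z₂ k v) := by
  rcases hx with ⟨hx, hxZ⟩ | ⟨hc, hc₁, hc₂⟩
  · obtain ⟨j, hj⟩ := (mem_extBoundary_iff (by omega)).1 hx
    exact exists_reachableIn_hub_of_onFace hd hL hj hxZ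
  · exact exists_reachableIn_hub_of_isCorner hd hL hc hc₁ hc₂

theorem shell_connected (hd : 3 ≤ d) (hL : 2 ≤ L) :
    ((ZdGraph d).induce (shell L z₁ z₂)).Connected := by
  obtain ⟨c₀, hc₀, hclean₀, hreach₀⟩ :=
    exists_isClean_reachableIn_hub hd hL (abs_of_nonneg (by omega : 0 ≤ L + 1)) ⟨0, by omega⟩
  refine SimpleGraph.induce_connected_of_reachableIn hreach₀.1 fun x hx => ?_
  obtain ⟨k, v, hv, hxv⟩ := exists_reachableIn_hub hd hL hx
  obtain ⟨c, hc, hclean, hcv⟩ := exists_isClean_reachableIn_hub hd hL hv k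
  exact hxv.trans (hcv.symm.trans (hclean.reachableIn hd hL hc hc₀ hclean₀))

theorem shell_subset : shell L z₁ z₂ ⊆ cube d L ∪ extBoundary d L := by
  rintro x (⟨hx, -⟩ | ⟨hc, -⟩)
  exacts [.inr hx, .inl hc.mem_cube]

theorem diff_shell_subset :
    (cube d L ∪ extBoundary d L) \ shell L z₁ z₂ ⊆ cube d L ∪ {z₁, z₂} := by
  rintro x ⟨hx | hx, hxS⟩
  · exact .inl hx
  · exact .inr (by_contra fun h => hxS (.inl ⟨hx, h⟩))

theorem notMem_shell_of_mem_pair (hz : z ∉ cube d L) (hzZ : z ∈ ({z₁, z₂} : Set _)) :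
    z ∉ shell L z₁ z₂ := by
  rintro (⟨-, h⟩ | ⟨hc, -⟩)
  exacts [h hzZ, hz hc.mem_cube]

theorem notMem_shell_of_adj (hy : y ∈ cube d L)
    (h : (ZdGraph d).Adj y z₁ ∨ (ZdGraph d).Adj y z₂) : y ∉ shell L z₁ z₂ := by
  rintro (⟨⟨hy', -⟩, -⟩ | ⟨-, h₁, h₂⟩)
  exacts [hy' hy, h.elim h₁ h₂]

/-- The box between `y` and the centre contains no corner of `K` other than possibly `y`. -/
theorem reachableIn_zero (hy : y ∈ cube d L) (hyS : y ∉ shell L z₁ z₂) :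
    (ZdGraph d).ReachableIn ((cube d L ∪ extBoundary d L) \ shell L z₁ z₂) y 0 := by
  refine ZdGraph.reachableIn_of_forall_uIcc fun w hw => ?_
  have hwy : ∀ i, |w i| ≤ |y i| ∧ (|y i| ≤ |w i| → w i = y i) := fun i => by
    have := hw i
    rw [Pi.zero_apply, mem_uIcc] at this
    rcases abs_cases (w i) with ⟨h1, h1'⟩ | ⟨h1, h1'⟩ <;>
      rcases abs_cases (y i) with ⟨h2, h2'⟩ | ⟨h2, h2'⟩ <;> rw [h1, h2] <;> omega
  have hwK : w ∈ cube d L := fun i => (hwy i).1.trans (hy i)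
  refine ⟨.inl hwK, fun hwS => ?_⟩
  rcases hwS with ⟨⟨hwK', -⟩, -⟩ | hwc
  · exact hwK' hwK
  · obtain rfl : w = y := funext fun i => (hwy i).2 ((hwc.1 i).symm ▸ hy i)
    exact hyS (.inr hwc)

theorem reachableIn_corridor (hz₁ : z₁ ∈ extBoundary d L) (hz₂ : z₂ ∈ extBoundary d L) :
    (ZdGraph d).ReachableIn ((cube d L ∪ extBoundary d L) \ shell L z₁ z₂) z₁ z₂ := by
  obtain ⟨y₁, hy₁, h₁⟩ := hz₁.2
  obtain ⟨y₂, hy₂, h₂⟩ := hz₂.2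
  have hy₁S := notMem_shell_of_adj (z₂ := z₂) hy₁ (.inl h₁.symm)
  have hy₂S := notMem_shell_of_adj (z₁ := z₁) hy₂ (.inr h₂.symm)
  have hz₁U : z₁ ∈ (cube d L ∪ extBoundary d L) \ shell L z₁ z₂ :=
    ⟨.inr hz₁, notMem_shell_of_mem_pair hz₁.1 (by simp)⟩
  have hz₂U : z₂ ∈ (cube d L ∪ extBoundary d L) \ shell L z₁ z₂ :=
    ⟨.inr hz₂, notMem_shell_of_mem_pair hz₂.1 (by simp)⟩
  exact (SimpleGraph.ReachableIn.of_adj hz₁U ⟨.inl hy₁, hy₁S⟩ h₁).trans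
    ((reachableIn_zero hy₁ hy₁S).trans ((reachableIn_zero hy₂ hy₂S).symm.trans
      (.of_adj ⟨.inl hy₂, hy₂S⟩ hz₂U h₂.symm)))

end Corridor

theorem exists_corridor_general (d : ℕ) (hd : 3 ≤ d) (L : ℕ) (hL : 100 ≤ L)
    (z₁ z₂ : Fin d → ℤ)
    (hz₁ : z₁ ∈ {x : Fin d → ℤ | x ∉ {y : Fin d → ℤ | ∀ i, |y i| ≤ (L : ℤ)} ∧
      ∃ y ∈ {y : Fin d → ℤ | ∀ i, |y i| ≤ (L : ℤ)}, (ZdGraph d).Adj x y})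
    (hz₂ : z₂ ∈ {x : Fin d → ℤ | x ∉ {y : Fin d → ℤ | ∀ i, |y i| ≤ (L : ℤ)} ∧
      ∃ y ∈ {y : Fin d → ℤ | ∀ i, |y i| ≤ (L : ℤ)}, (ZdGraph d).Adj x y}) :
    ∃ U : Set (Fin d → ℤ),
      U ⊆ {y : Fin d → ℤ | ∀ i, |y i| ≤ (L : ℤ)} ∪ {z₁, z₂} ∧
      (∃ (l : ℕ) (τ : ℕ → Fin d → ℤ), τ 0 = z₁ ∧ τ l = z₂ ∧
        (∀ i < l, (ZdGraph d).Adj (τ i) (τ (i + 1))) ∧ ∀ i ≤ l, τ i ∈ U) ∧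
      ((ZdGraph d).induce
        (({y : Fin d → ℤ | ∀ i, |y i| ≤ (L : ℤ)} ∪
          {x : Fin d → ℤ | x ∉ {y : Fin d → ℤ | ∀ i, |y i| ≤ (L : ℤ)} ∧
            ∃ y ∈ {y : Fin d → ℤ | ∀ i, |y i| ≤ (L : ℤ)}, (ZdGraph d).Adj x y}) \ U)).Connected := by
  open Corridor in
  refine ⟨(cube d L ∪ extBoundary d L) \ shell L z₁ z₂, diff_shell_subset,
    (reachableIn_corridor hz₁ hz₂).exists_seq, ?_⟩
  change ((ZdGraph d).induce ((cube d L ∪ extBoundary d L) \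
    ((cube d L ∪ extBoundary d L) \ shell L z₁ z₂))).Connected
  rw [sdiff_sdiff_cancel_left shell_subset]
  exact shell_connected hd (by omega)

/-- For `K = B(0, L)` (`L ≥ 100`) and distinct points `z₁, z₂` of the exterior
boundary of `K`, there is `U ⊆ K ∪ {z₁, z₂}` containing a nearest-neighbor
path from `z₁` to `z₂` such that `K̄ \ U` is connected. -/
theorem exists_corridor (d : ℕ) (hd : 3 ≤ d) (L : ℕ) (hL : 100 ≤ L)
    (z₁ z₂ : Fin d → ℤ) (hne : z₁ ≠ z₂)
    (hz₁ : z₁ ∈ {x : Fin d → ℤ | x ∉ {y : Fin d → ℤ | ∀ i, |y i| ≤ (L : ℤ)} ∧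
      ∃ y ∈ {y : Fin d → ℤ | ∀ i, |y i| ≤ (L : ℤ)}, (ZdGraph d).Adj x y})
    (hz₂ : z₂ ∈ {x : Fin d → ℤ | x ∉ {y : Fin d → ℤ | ∀ i, |y i| ≤ (L : ℤ)} ∧
      ∃ y ∈ {y : Fin d → ℤ | ∀ i, |y i| ≤ (L : ℤ)}, (ZdGraph d).Adj x y}) :
    ∃ U : Set (Fin d → ℤ),
      U ⊆ {y : Fin d → ℤ | ∀ i, |y i| ≤ (L : ℤ)} ∪ {z₁, z₂} ∧
      (∃ (l : ℕ) (τ : ℕ → Fin d → ℤ), τ 0 = z₁ ∧ τ l = z₂ ∧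
        (∀ i < l, (ZdGraph d).Adj (τ i) (τ (i + 1))) ∧ ∀ i ≤ l, τ i ∈ U) ∧
      ((ZdGraph d).induce
        (({y : Fin d → ℤ | ∀ i, |y i| ≤ (L : ℤ)} ∪
          {x : Fin d → ℤ | x ∉ {y : Fin d → ℤ | ∀ i, |y i| ≤ (L : ℤ)} ∧
            ∃ y ∈ {y : Fin d → ℤ | ∀ i, |y i| ≤ (L : ℤ)}, (ZdGraph d).Adj x y}) \ U)).Connected :=
  exists_corridor_general d hd L hL z₁ z₂ hz₁ hz₂
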